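/- arXiv:1710.01782 — 3 statements merged into one kernel-verified Lean document; each statement's English description precedes it below -/
import Mathlib

section
/- Let (G(s),α) be a stable network with n agents and let a, b be two distinct vertices such that agent a buys an edge (a,a') with a' ≠ b. If d_G(a,b) ≥ 2 and there exists a shortest path tree T of G rooted at b such that either (a,a') is not an edge of T or a' is the parent of a in T, then distcost(a) ≤ distcost(b) + n − 3. Furthermore, if a also buys an edge (a,a'') with a'' ≠ a', a'' ≠ b, and (a,a'') is not an edge of T, then distcost(a) ≤ distcost(b) + n − 3 − α. -/
open scoped BigOperators

namespace NCG

variable {V : Type*} [Fintype V] [DecidableEq V]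

/-- The network induced by a strategy vector `st`: `{u,v}` is an edge iff (at least)
one of the endpoints buys it, i.e. `v ∈ st u` or `u ∈ st v`. -/
def graph (st : V → Finset V) : SimpleGraph V where
  Adj u v := u ≠ v ∧ (v ∈ st u ∨ u ∈ st v)
  symm := ⟨fun u v h => ⟨h.1.symm, h.2.symm⟩⟩
  loopless := ⟨fun u h => h.1 rfl⟩

open scoped Classical in
/-- The distance cost of agent `u`: the sum of the graph distances to all nodes if the
network is connected, and `⊤` otherwise. -/
noncomputable def distcost (st : V → Finset V) (u : V) : EReal :=
  if (graph st).Connected then (((∑ w : V, ((graph st).dist u w : ℝ)) : ℝ) : EReal) else ⊤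

/-- The cost of agent `u`: `α` per bought edge plus the distance cost. -/
noncomputable def cost (α : ℝ) (st : V → Finset V) (u : V) : EReal :=
  ((α * (st u).card : ℝ) : EReal) + distcost st u

/-- A network is stable (a pure Nash equilibrium) if no agent `u` can strictly
decrease her cost by unilaterally changing her own strategy set `st u`. -/
def Stable (α : ℝ) (st : V → Finset V) : Prop :=
  ∀ u : V, ∀ t : Finset V, u ∉ t → cost α st u ≤ cost α (Function.update st u t) u

/-- The social cost of a network: the sum of the costs of all agents. -/
noncomputable def socialCost (α : ℝ) (st : V → Finset V) : EReal :=
  ∑ u : V, cost α st u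

/-- The optimal (minimum) social cost over all strategy vectors on agent set `W`. -/
noncomputable def optCost (α : ℝ) (W : Type*) [Fintype W] [DecidableEq W] : EReal :=
  sInf {c : EReal | ∃ st : W → Finset W, (∀ u, u ∉ st u) ∧ c = socialCost α st}

/-- `T` is a shortest path tree of `G` rooted at `r`: a spanning tree of `G`
preserving all distances from `r`. -/
def IsSPT (G : SimpleGraph V) (r : V) (T : SimpleGraph V) : Prop :=
  T ≤ G ∧ T.IsTree ∧ ∀ x, T.dist r x = G.dist r x

/-- The subgraph of `G` induced on `S` is biconnected: it has at least 3 vertices,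
it is connected, and it has no cut vertex. -/
def IsBiconnectedOn (G : SimpleGraph V) (S : Set V) : Prop :=
  3 ≤ S.ncard ∧ (G.induce S).Connected ∧ ∀ x ∈ S, (G.induce (S \ {x})).Connected

/-- `S` induces a biconnected component of `G`: a maximal biconnected induced subgraph. -/
def IsBiconnectedComponent (G : SimpleGraph V) (S : Set V) : Prop :=
  IsBiconnectedOn G S ∧ ∀ S' : Set V, S ⊆ S' → IsBiconnectedOn G S' → S' = S

/-- `⟨v,u⟩` is a critical pair (with witnesses `v₁, v₂, u'` and biconnected component `H`)
of the network induced by the strategy vector `st`: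
(1) `v ∈ H` buys the two distinct non-bridge edges `(v,v₁)` and `(v,v₂)` with `v₁,v₂ ∈ H`;
(2) `u ∈ H`, `u ≠ v`, buys an edge `(u,u')` with `u' ∈ H`, `u' ≠ v`;
(3) `d(v,u) ≥ 2`;
(4) some shortest path from `v` to `u` uses the edge `(v,v₁)`;
(5) some shortest path from `v` to `u'` does not use the edge `(u,u')`. -/
def IsCriticalPair (st : V → Finset V) (H : Set V) (v u v₁ v₂ u' : V) : Prop :=
  IsBiconnectedComponent (graph st) H ∧
  v ∈ H ∧ v₁ ∈ H ∧ v₂ ∈ H ∧ v₁ ≠ v₂ ∧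
  v₁ ∈ st v ∧ v₂ ∈ st v ∧
  ¬ (graph st).IsBridge (Sym2.mk v v₁) ∧ ¬ (graph st).IsBridge (Sym2.mk v v₂) ∧
  u ∈ H ∧ u ≠ v ∧ u' ∈ H ∧ u' ≠ v ∧ u' ∈ st u ∧
  2 ≤ (graph st).dist v u ∧
  (∃ p : (graph st).Walk v u, p.IsPath ∧ p.length = (graph st).dist v u ∧
    Sym2.mk v v₁ ∈ p.edges) ∧
  (∃ p : (graph st).Walk v u', p.IsPath ∧ p.length = (graph st).dist v u' ∧
    Sym2.mk u u' ∉ p.edges)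

/-- A critical pair is strong if moreover some shortest path from `u` to `v₂`
does not use the edge `(v,v₂)`. -/
def IsStrongCriticalPair (st : V → Finset V) (H : Set V) (v u v₁ v₂ u' : V) : Prop :=
  IsCriticalPair st H v u v₁ v₂ u' ∧
  ∃ p : (graph st).Walk u v₂, p.IsPath ∧ p.length = (graph st).dist u v₂ ∧
    Sym2.mk v v₂ ∉ p.edges

/-- A cycle `c` in `G` is a min cycle if for every two vertices on the cycle, their
distance along the cycle equals their distance in `G`. -/
def IsMinCycle (G : SimpleGraph V) {a : V} (c : G.Walk a a) : Prop :=
  c.IsCycle ∧ ∀ (x : V) (hx : x ∈ c.toSubgraph.verts) (y : V) (hy : y ∈ c.toSubgraph.verts),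
    c.toSubgraph.coe.dist ⟨x, hx⟩ ⟨y, hy⟩ = G.dist x y

/-- A cycle `c` of the network induced by `st` is directed if, traversed in one of the
two possible directions, every edge of the cycle is bought by its tail vertex. -/
def IsDirectedCycle (st : V → Finset V) {a : V} (c : (graph st).Walk a a) : Prop :=
  c.IsCycle ∧
    ((∀ i < c.length, c.getVert (i + 1) ∈ st (c.getVert i)) ∨
     (∀ i < c.length, c.getVert i ∈ st (c.getVert (i + 1))))

/-- `c` is a centroid of (the subgraph of `G` induced on) `S`: every connected component
obtained from `S` by removing `c` contains at most `|S|/2` vertices. -/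
def IsCentroidOn (G : SimpleGraph V) (S : Set V) (c : V) : Prop :=
  c ∈ S ∧ ∀ x ∈ S, x ≠ c →
    2 * {y | y ∈ S ∧ ∃ p : G.Walk x y, c ∉ p.support ∧ ∀ z ∈ p.support, z ∈ S}.ncard
      ≤ S.ncard

end NCG

/-
Agent `a` may deviate by dropping the edges it buys towards the set `F` (here `{a'}` or
`{a', a''}`) and buying the edge `ab` instead. Since no vertex of `F` is a child of `a` in the
shortest path tree `T` rooted at `b`, every tree edge from a vertex to its child survives this
deviation, so following the new edge `ab` and then `T` shows `d'(a, w) ≤ d(b, w) + 1` for every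
`w`. Summing, with `d'(a, a) = 0` and `d(b, a) ≥ 2`, gives
`distcost'(a) ≤ distcost(b) + n - 3`, and stability of the network bounds `distcost(a)` by this
plus `α (|F| - 1)`, the money the deviation saves.
-/

open SimpleGraph

namespace SimpleGraph

variable {V : Type*} {G : SimpleGraph V} {u v : V}

theorem Reachable.exists_adj_dist_add_one_eq (h : G.Reachable u v) (huv : u ≠ v) :
    ∃ x, G.Adj x v ∧ G.dist u x + 1 = G.dist u v := by
  obtain ⟨p, hp⟩ := h.exists_walk_length_eq_dist
  have hnil : ¬p.Nil := Walk.not_nil_of_ne huv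
  refine ⟨p.penultimate, p.adj_penultimate hnil, ?_⟩
  rw [← length_eq_dist_of_subwalk hp (Walk.isSubwalk_rfl p).dropLast,
    Walk.length_dropLast_add_one hnil, hp]

theorem exists_walk_length_le_dist_add_one {T G' : SimpleGraph V} {a b : V}
    (hT : T.Connected) (hab : G'.Adj a b)
    (hchild : ∀ x w, T.Adj x w → T.dist b x + 1 = T.dist b w → w ≠ a → G'.Adj x w)
    (w : V) : ∃ q : G'.Walk a w, q.length ≤ T.dist b w + 1 := by
  induction hn : T.dist b w generalizing w with
  | zero =>
    obtain rfl : b = w := ((hT b w).dist_eq_zero_iff).mp hn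
    exact ⟨Walk.cons hab Walk.nil, le_rfl⟩
  | succ n ih =>
    have hbw : b ≠ w := by rintro rfl; simp at hn
    obtain ⟨x, hxw, hx⟩ := (hT b w).exists_adj_dist_add_one_eq hbw
    by_cases hwa : w = a
    · subst hwa
      exact ⟨Walk.nil, Nat.zero_le _⟩
    obtain ⟨q, hq⟩ := ih x (by omega)
    refine ⟨q.concat (hchild x w hxw hx hwa), ?_⟩
    rw [Walk.length_concat]
    omega

end SimpleGraph

theorem Fintype.sum_add_three_le_sum_add_card {V : Type*} [Fintype V]
    {f g : V → ℕ} {a : V} (hfa : f a = 0) (hga : 2 ≤ g a) (hfg : ∀ w, f w ≤ g w + 1) :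
    ∑ w, f w + 3 ≤ ∑ w, g w + Fintype.card V := by
  classical
  have key : ∀ w, f w + (if w = a then 3 else 0) ≤ g w + 1 := by
    intro w
    split_ifs with h
    · subst h; omega
    · simpa using hfg w
  have := Finset.sum_le_sum fun w (_ : w ∈ Finset.univ) => key w
  simpa [Finset.sum_add_distrib] using this

namespace NCG

variable {V : Type*}

theorem graph_adj {st : V → Finset V} {u v : V} :
    (graph st).Adj u v ↔ u ≠ v ∧ (v ∈ st u ∨ u ∈ st v) :=
  Iff.rfl

variable [DecidableEq V]

theorem graph_update_adj {st : V → Finset V} {a : V} {t : Finset V} {x y : V}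
    (h : (graph st).Adj x y) (hy : y ≠ a) (ht : x = a → y ∈ st a → y ∈ t) :
    (graph (Function.update st a t)).Adj x y := by
  obtain ⟨hxy, hbuy⟩ := h
  refine ⟨hxy, ?_⟩
  rw [Function.update_of_ne hy]
  by_cases hx : x = a
  · subst hx
    rw [Function.update_self]
    exact hbuy.imp_left (ht rfl)
  · rwa [Function.update_of_ne hx]

theorem graph_update_adj_of_mem {st : V → Finset V} {a b : V} {t : Finset V}
    (hab : a ≠ b) (hb : b ∈ t) : (graph (Function.update st a t)).Adj a b :=
  graph_adj.mpr ⟨hab, Or.inl (by rwa [Function.update_self])⟩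

section Finite

variable [Fintype V]

theorem distcost_of_connected {st : V → Finset V} (h : (graph st).Connected) (u : V) :
    distcost st u = ((∑ w, ((graph st).dist u w : ℝ) : ℝ) : EReal) := by
  classical
  simp only [distcost, if_pos h]

theorem Stable.card_add_sum_dist_le {α : ℝ} {st : V → Finset V} (hstable : Stable α st)
    {a : V} {t : Finset V} (hat : a ∉ t) (hG : (graph st).Connected)
    (hG' : (graph (Function.update st a t)).Connected) :
    α * (st a).card + ∑ w, ((graph st).dist a w : ℝ) ≤
      α * t.card + ∑ w, ((graph (Function.update st a t)).dist a w : ℝ) := by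
  have h := hstable a t hat
  rw [cost, cost, distcost_of_connected hG, distcost_of_connected hG',
    Function.update_self] at h
  exact_mod_cast h

/-- Stability against the deviation of `a` that drops the edges bought towards `F` and buys
the edge `ab`. -/
theorem Stable.sum_dist_add_le {α : ℝ} {st : V → Finset V} (hself : ∀ u, u ∉ st u)
    (hstable : Stable α st) (hG : (graph st).Connected) {a b : V}
    (hd : 2 ≤ (graph st).dist a b) {T : SimpleGraph V} (hT : IsSPT (graph st) b T)
    {F : Finset V} (hF : F ⊆ st a) (hchild : ∀ c ∈ F, T.Adj a c → T.dist b a + 1 ≠ T.dist b c) :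
    ∑ w, ((graph st).dist a w : ℝ) + α * (F.card - 1) ≤
      ∑ w, ((graph st).dist b w : ℝ) + Fintype.card V - 3 := by
  have hab : a ≠ b := by rintro rfl; simp at hd
  have hba : b ∉ st a := fun h => by
    rw [dist_eq_one_iff_adj.mpr (graph_adj.mpr ⟨hab, Or.inl h⟩)] at hd
    omega
  set t := insert b (st a \ F)
  set G' := graph (Function.update st a t)
  have hat : a ∉ t := by
    simp only [t, Finset.mem_insert, Finset.mem_sdiff, not_or]
    exact ⟨hab, fun h => hself a h.1⟩
  have hcard : (t.card : ℝ) + F.card = (st a).card + 1 := by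
    have := Finset.card_sdiff_add_card_eq_card hF
    rw [Finset.card_insert_of_notMem fun h => hba (Finset.mem_sdiff.mp h).1]
    exact_mod_cast (by omega : (st a \ F).card + 1 + F.card = (st a).card + 1)
  have hwalk := exists_walk_length_le_dist_add_one (G' := G') hT.2.1.connected
    (graph_update_adj_of_mem hab (Finset.mem_insert_self b _))
    (fun x w hxw hx hwa => graph_update_adj (hT.1 hxw) hwa fun hxa hw => by
      subst hxa
      exact Finset.mem_insert_of_mem (Finset.mem_sdiff.mpr ⟨hw, fun hwF => hchild w hwF hxw hx⟩))
  have hG' : G'.Connected :=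
    (connected_iff_exists_forall_reachable G').mpr
      ⟨a, fun w => (hwalk w).elim fun q _ => q.reachable⟩
  have hsum : ∑ w, G'.dist a w + 3 ≤ ∑ w, (graph st).dist b w + Fintype.card V :=
    Fintype.sum_add_three_le_sum_add_card dist_self (by rwa [dist_comm])
      fun w => by
        obtain ⟨q, hq⟩ := hwalk w
        exact (G'.dist_le q).trans (by rw [← hT.2.2 w]; exact hq)
  have hstab := hstable.card_add_sum_dist_le hat hG hG'
  have hsum' : ∑ w, (G'.dist a w : ℝ) + 3 ≤ ∑ w, ((graph st).dist b w : ℝ) + Fintype.card V := by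
    exact_mod_cast hsum
  linear_combination hstab + hsum' + α * hcard

end Finite

end NCG

theorem distcost_bound_of_spt_general {V : Type*} [Fintype V] [DecidableEq V]
    (α : ℝ) (st : V → Finset V) (hself : ∀ u, u ∉ st u)
    (hstable : NCG.Stable α st)
    (a b a' : V) (ha' : a' ∈ st a)
    (hd : 2 ≤ (NCG.graph st).dist a b)
    (T : SimpleGraph V) (hT : NCG.IsSPT (NCG.graph st) b T)
    (hcond : ¬ T.Adj a a' ∨ (T.Adj a a' ∧ T.dist b a' + 1 = T.dist b a)) :
    NCG.distcost st a ≤ NCG.distcost st b + (((Fintype.card V : ℝ) - 3 : ℝ) : EReal) ∧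
    (∀ a'' : V, a'' ∈ st a → a'' ≠ a' → a'' ≠ b → ¬ T.Adj a a'' →
      NCG.distcost st a ≤
        NCG.distcost st b + (((Fintype.card V : ℝ) - 3 - α : ℝ) : EReal)) := by
  by_cases hG : (NCG.graph st).Connected
  swap
  · have hb : NCG.distcost st b = ⊤ := by simp [NCG.distcost, hG]
    simp only [hb, EReal.top_add_of_ne_bot (EReal.coe_ne_bot _), le_top, implies_true, and_self]
  have ha'_not_child : T.Adj a a' → T.dist b a + 1 ≠ T.dist b a' := by
    intro hadj
    rcases hcond with h | ⟨_, h⟩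
    · exact absurd hadj h
    · omega
  rw [NCG.distcost_of_connected hG a, NCG.distcost_of_connected hG b]
  constructor
  · have h := hstable.sum_dist_add_le hself hG hd hT (F := {a'}) (by simpa using ha')
      (by simpa using ha'_not_child)
    rw [← EReal.coe_add, EReal.coe_le_coe_iff]
    simp only [Finset.card_singleton, Nat.cast_one, sub_self, mul_zero, add_zero] at h
    linarith
  · intro a'' ha'' hne _ ha''_not_adj
    have h := hstable.sum_dist_add_le hself hG hd hT (F := {a', a''})
      (Finset.insert_subset ha' (Finset.singleton_subset_iff.mpr ha''))
      (by simpa using ⟨ha'_not_child, fun h => absurd h ha''_not_adj⟩)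
    rw [← EReal.coe_add, EReal.coe_le_coe_iff]
    rw [Finset.card_pair hne.symm] at h
    push_cast at h
    linarith

/-- Let `(G(st),α)` be a stable network with `n` agents, `a ≠ b`, where `a`
buys an edge `(a,a')` with `a' ≠ b`, `d_G(a,b) ≥ 2`, and let `T` be a shortest path tree of
`G` rooted at `b` in which either `(a,a')` is not an edge or `a'` is the parent of `a`.
Then `distcost(a) ≤ distcost(b) + n − 3`; moreover if `a` also buys an edge `(a,a'')` with
`a'' ≠ a'`, `a'' ≠ b` and `(a,a'')` not an edge of `T`, then
`distcost(a) ≤ distcost(b) + n − 3 − α`. -/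
theorem distcost_bound_of_spt {V : Type*} [Fintype V] [DecidableEq V]
    (α : ℝ) (st : V → Finset V) (hself : ∀ u, u ∉ st u)
    (hstable : NCG.Stable α st)
    (a b a' : V) (hab : a ≠ b) (ha' : a' ∈ st a) (ha'b : a' ≠ b)
    (hd : 2 ≤ (NCG.graph st).dist a b)
    (T : SimpleGraph V) (hT : NCG.IsSPT (NCG.graph st) b T)
    (hcond : ¬ T.Adj a a' ∨ (T.Adj a a' ∧ T.dist b a' + 1 = T.dist b a)) :
    NCG.distcost st a ≤ NCG.distcost st b + (((Fintype.card V : ℝ) - 3 : ℝ) : EReal) ∧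
    (∀ a'' : V, a'' ∈ st a → a'' ≠ a' → a'' ≠ b → ¬ T.Adj a a'' →
      NCG.distcost st a ≤
        NCG.distcost st b + (((Fintype.card V : ℝ) - 3 - α : ℝ) : EReal)) :=
  distcost_bound_of_spt_general α st hself hstable a b a' ha' hd T hT hcond
end

section
/- If ⟨v,u⟩ is a critical pair of a network (G,α) (with associated vertices v₁, v₂, u' as in the definition), then there exists a shortest path tree T of G rooted at v such that either the edge (u,u') is not an edge of T or u' is the parent of u in T. -/
open scoped BigOperators

/-!
Give every vertex `x ≠ v` a parent: a neighbour one step closer to `v`. Joining each vertex to its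
parent yields a connected spanning subgraph with at most `n - 1` edges, hence a tree, in which
every vertex keeps its distance to `v`. Take as parent of `u'` the penultimate vertex of a
shortest `v`–`u'` path avoiding the edge `(u,u')`; it is not `u`, so `(u,u')` can only enter the
tree as the parent edge of `u`.
-/

namespace SimpleGraph

variable {V : Type*} {G : SimpleGraph V} {r x : V}

lemma Walk.dist_penultimate_add_one {p : G.Walk r x} (hp : p.length = G.dist r x) (hx : x ≠ r) :
    G.dist r p.penultimate + 1 = G.dist r x := by
  rw [← length_eq_dist_of_subwalk hp (isSubwalk_rfl p).dropLast, ← hp,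
    Walk.length_dropLast_add_one (Walk.not_nil_of_ne hx.symm)]

lemma Connected.exists_adj_dist_add_one (hG : G.Connected) (r : V) {x : V} (hx : x ≠ r) :
    ∃ y, G.Adj x y ∧ G.dist r y + 1 = G.dist r x := by
  obtain ⟨p, hp⟩ := hG.exists_walk_length_eq_dist r x
  exact ⟨p.penultimate, (p.adj_penultimate (Walk.not_nil_of_ne hx.symm)).symm,
    p.dist_penultimate_add_one hp hx⟩

def IsShortestPathParent (G : SimpleGraph V) (r : V) (f : V → V) : Prop :=
  ∀ x, x ≠ r → G.Adj x (f x) ∧ G.dist r (f x) + 1 = G.dist r x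

lemma Connected.exists_isShortestPathParent_eq (hG : G.Connected) {x₀ y₀ : V} (hx₀ : x₀ ≠ r)
    (hadj : G.Adj x₀ y₀) (hdist : G.dist r y₀ + 1 = G.dist r x₀) :
    ∃ f, G.IsShortestPathParent r f ∧ f x₀ = y₀ := by
  classical
  choose f hf using fun x : {x // x ≠ r} => hG.exists_adj_dist_add_one r x.2
  refine ⟨fun x => if h : x = x₀ then y₀ else if hr : x = r then r else f ⟨x, hr⟩,
    fun x hx => ?_, dif_pos rfl⟩
  by_cases h : x = x₀
  · subst h
    simpa using ⟨hadj, hdist⟩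
  · simpa [h, hx] using hf ⟨x, hx⟩

def parentGraph (r : V) (f : V → V) : SimpleGraph V :=
  fromRel fun x y => x ≠ r ∧ y = f x

variable {f : V → V}

lemma eq_of_parentGraph_adj {y : V} (h : (parentGraph r f).Adj x y) (hy : f y ≠ x) :
    x ≠ r ∧ y = f x := by
  rcases h with ⟨-, h | h⟩
  · exact h
  · exact absurd h.2.symm hy

section IsShortestPathParent

variable (hf : G.IsShortestPathParent r f)
include hf

lemma parentGraph_le : parentGraph r f ≤ G := by
  rintro x y ⟨-, ⟨hx, rfl⟩ | ⟨hy, rfl⟩⟩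
  · exact (hf x hx).1
  · exact (hf y hy).1.symm

lemma parentGraph_adj_parent (hx : x ≠ r) : (parentGraph r f).Adj (f x) x :=
  ⟨(hf x hx).1.ne.symm, Or.inr ⟨hx, rfl⟩⟩

lemma exists_parentGraph_walk_length_eq_dist (x : V) :
    ∃ p : (parentGraph r f).Walk r x, p.length = G.dist r x := by
  induction hn : G.dist r x using Nat.strong_induction_on generalizing x with
  | _ n ih =>
    by_cases hx : x = r
    · subst hx
      exact ⟨.nil, by simp [← hn]⟩
    · obtain ⟨p, hp⟩ := ih _ (by have := (hf x hx).2; omega) (f x) rfl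
      exact ⟨p.concat (parentGraph_adj_parent hf hx), by simp [hp, (hf x hx).2, hn]⟩

lemma parentGraph_dist (x : V) : (parentGraph r f).dist r x = G.dist r x := by
  obtain ⟨p, hp⟩ := exists_parentGraph_walk_length_eq_dist hf x
  exact le_antisymm (hp ▸ dist_le p) (p.reachable.dist_anti (parentGraph_le hf))

lemma parentGraph_connected : (parentGraph r f).Connected := by
  have hr (x : V) : (parentGraph r f).Reachable r x :=
    (exists_parentGraph_walk_length_eq_dist hf x).choose.reachable
  exact (connected_iff _).2 ⟨fun x y => (hr x).symm.trans (hr y), ⟨r⟩⟩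

end IsShortestPathParent

lemma card_edgeSet_parentGraph_add_one_le [Fintype V] [DecidableEq V] :
    Nat.card (parentGraph r f).edgeSet + 1 ≤ Nat.card V := by
  classical
  have hsub : (parentGraph r f).edgeFinset ⊆ (Finset.univ.erase r).image fun x => s(x, f x) := by
    rintro e he
    induction e using Sym2.ind with
    | _ x y =>
      rw [mem_edgeFinset, mem_edgeSet] at he
      rcases he with ⟨-, ⟨hx, rfl⟩ | ⟨hy, rfl⟩⟩
      · exact Finset.mem_image.2 ⟨x, by simpa using hx, rfl⟩
      · exact Finset.mem_image.2 ⟨y, by simpa using hy, Sym2.eq_swap⟩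
  have hcard := (Finset.card_le_card hsub).trans Finset.card_image_le
  rw [Finset.card_erase_of_mem (Finset.mem_univ r), Finset.card_univ] at hcard
  have := Fintype.card_pos_iff.2 ⟨r⟩
  rw [Nat.card_eq_fintype_card, Nat.card_eq_fintype_card, ← edgeFinset_card]
  omega

lemma isTree_parentGraph [Fintype V] [DecidableEq V] (hf : G.IsShortestPathParent r f) :
    (parentGraph r f).IsTree := by
  have hconn := parentGraph_connected hf
  exact isTree_iff_connected_and_card.2 ⟨hconn,
    le_antisymm card_edgeSet_parentGraph_add_one_le hconn.card_vert_le_card_edgeSet_add_one⟩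

lemma isSPT_parentGraph [Fintype V] [DecidableEq V] (hf : G.IsShortestPathParent r f) :
    NCG.IsSPT G r (parentGraph r f) :=
  ⟨parentGraph_le hf, isTree_parentGraph hf, parentGraph_dist hf⟩

end SimpleGraph

open SimpleGraph

theorem critical_pair_spt_rooted_at_v_general {V : Type*} [Fintype V] [DecidableEq V]
    (st : V → Finset V)
    (hconn : (NCG.graph st).Connected)
    (H : Set V) (v u v₁ v₂ u' : V)
    (hcp : NCG.IsCriticalPair st H v u v₁ v₂ u') :
    ∃ T : SimpleGraph V, NCG.IsSPT (NCG.graph st) v T ∧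
      (¬ T.Adj u u' ∨ (T.Adj u u' ∧ T.dist v u' + 1 = T.dist v u)) := by
  obtain ⟨-, -, -, -, -, -, -, -, -, -, -, -, hu'v, -, -, -, p, -, hp, hpu⟩ := hcp
  have hnil : ¬p.Nil := Walk.not_nil_of_ne hu'v.symm
  have hpen : p.penultimate ≠ u := fun h => hpu (h ▸ p.mk_penultimate_end_mem_edges hnil)
  obtain ⟨f, hf, hfu'⟩ := hconn.exists_isShortestPathParent_eq hu'v
    (p.adj_penultimate hnil).symm (p.dist_penultimate_add_one hp hu'v)
  refine ⟨parentGraph v f, isSPT_parentGraph hf, ?_⟩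
  by_cases hadj : (parentGraph v f).Adj u u'
  · obtain ⟨huv, hu'⟩ := eq_of_parentGraph_adj hadj (hfu' ▸ hpen)
    refine .inr ⟨hadj, ?_⟩
    rw [parentGraph_dist hf, parentGraph_dist hf, hu']
    exact (hf u huv).2
  · exact .inl hadj

/-- If `⟨v,u⟩` is a critical pair of a (connected) network, then there is
a shortest path tree `T` rooted at `v` in which either the edge `(u,u')` does not occur or
`u'` is the parent of `u`. -/
theorem critical_pair_spt_rooted_at_v {V : Type*} [Fintype V] [DecidableEq V]
    (α : ℝ) (st : V → Finset V) (hself : ∀ u, u ∉ st u)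
    (hconn : (NCG.graph st).Connected)
    (H : Set V) (v u v₁ v₂ u' : V)
    (hcp : NCG.IsCriticalPair st H v u v₁ v₂ u') :
    ∃ T : SimpleGraph V, NCG.IsSPT (NCG.graph st) v T ∧
      (¬ T.Adj u u' ∨ (T.Adj u u' ∧ T.dist v u' + 1 = T.dist v u)) :=
  critical_pair_spt_rooted_at_v_general st hconn H v u v₁ v₂ u' hcp
end

section
/- Let (T,α) be a stable (pure Nash equilibrium) network whose induced graph T is a tree on n vertices, rooted at a centroid c of T; let u be a child of c in T and let v be a leaf of T contained in the subtree of T rooted at u. Let c_1,…,c_k be the vertices along the path in T between c_0 = u and c_k = v, where c_{i+1} is the child of c_i, and for every i = 1,…,k let n_i = |{x ∈ V : d_T(c_i,x) < d_T(c_j,x) for all j ≠ i}|. Then for every i = 1,…,k, Σ_{j=1}^{i} n_j ≥ n·Σ_{j=1}^{i} 1/2^j. -/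
open scoped BigOperators

/-!
Write `A_m` for the branch below the `m`-th edge of the path `c, c₀, c₁, …, c_k` (the vertices
closer to its lower end), so that `A₀ ⊇ A₁ ⊇ ⋯` and the centroid gives `2 |A₀| ≤ n`. If the owner
`a` of a tree edge `ab` swaps it for `ab'`, with `b' ≠ a` a neighbour of `b`, only the distances
from `a` into the branch of `b` change; so stability makes `b` at least as good a median of that
branch as `b'`, which in a tree says `2 |branch b b'| ≤ |branch a b|`. Along the path this first
shows that every edge below `c₀` is bought by its upper end (bought from below, it could be moved
upwards, where the other side has at least `n/2` vertices), and then that `2^m |A_m| ≤ n`.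
Finally, the distances from `x ∉ A_{i+1}` to `c₁, …, c_k` first decrease and then increase, so
`x` lies in the cell of some `c_j` with `j ≤ i`: these cells cover at least
`n - n/2^i = n ∑_{j ≤ i} 2^{-j}` vertices.
-/

open Finset

theorem exists_forall_lt_of_descents_downward_closed (g : ℕ → ℕ) {k i : ℕ} (hi1 : 1 ≤ i)
    (hik : i ≤ k) (hstep : ∀ l < k, g (l + 1) ≠ g l)
    (hdesc : ∀ m l, m ≤ l → l < k → g (l + 1) < g l → g (m + 1) < g m)
    (hi : i < k → ¬ g (i + 1) < g i) :
    ∃ j ∈ Icc 1 i, ∀ l, 1 ≤ l → l ≤ k → l ≠ j → g j < g l := by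
  obtain ⟨j, ⟨hj1, hjP⟩, hjmin⟩ : ∃ j, (1 ≤ j ∧ (i ≤ j ∨ g j < g (j + 1))) ∧
      ∀ l < j, ¬ (1 ≤ l ∧ (i ≤ l ∨ g l < g (l + 1))) :=
    have hP : ∃ j, 1 ≤ j ∧ (i ≤ j ∨ g j < g (j + 1)) := ⟨i, hi1, .inl le_rfl⟩
    ⟨Nat.find hP, Nat.find_spec hP, fun _ ↦ Nat.find_min hP⟩
  have hji : j ≤ i := by
    by_contra! h
    exact hjmin i h ⟨hi1, .inl le_rfl⟩
  have hanti : StrictAntiOn g (Set.Icc 1 j) :=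
    strictAntiOn_of_add_one_lt Set.ordConnected_Icc fun l _ hl hl' ↦ by
      simp only [Set.mem_Icc] at hl hl'
      have := hjmin l (by omega)
      have := hstep l (by omega)
      omega
  have hmono : StrictMonoOn g (Set.Icc j k) :=
    strictMonoOn_of_lt_add_one Set.ordConnected_Icc fun l _ hl hl' ↦ by
      simp only [Set.mem_Icc] at hl hl'
      have := hstep l (by omega)
      by_contra hup
      have := hdesc j l hl.1 (by omega) (by omega)
      rcases hjP with hij | hasc
      · exact hi (by omega) (by rwa [show i = j by omega])
      · omega
  refine ⟨j, mem_Icc.2 ⟨hj1, hji⟩, fun l hl1 hlk hlj ↦ ?_⟩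
  rcases lt_or_gt_of_ne hlj with hl | hl
  · exact hanti ⟨hl1, hl.le⟩ ⟨hj1, le_rfl⟩ hl
  · exact hmono ⟨le_rfl, by omega⟩ ⟨hl.le, hlk⟩ hl

theorem card_le_card_add_sum_ncard {V ι : Type*} [Fintype V] (E : Finset V) (s : Finset ι)
    (S : ι → Set V) (h : ∀ x ∉ E, ∃ j ∈ s, x ∈ S j) :
    Fintype.card V ≤ #E + ∑ j ∈ s, (S j).ncard := by
  have hcover : Set.univ ⊆ (E : Set V) ∪ ⋃ j ∈ s, S j := fun x _ ↦ by
    by_cases hx : x ∈ E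
    · exact .inl hx
    · obtain ⟨j, hj, hxj⟩ := h x hx
      exact .inr (Set.mem_biUnion hj hxj)
  calc Fintype.card V = (Set.univ : Set V).ncard := by simp
    _ ≤ ((E : Set V) ∪ ⋃ j ∈ s, S j).ncard := Set.ncard_le_ncard hcover
    _ ≤ (E : Set V).ncard + (⋃ j ∈ s, S j).ncard := Set.ncard_union_le _ _
    _ ≤ #E + ∑ j ∈ s, (S j).ncard := by
      rw [Set.ncard_coe_finset]
      gcongr
      exact s.set_ncard_biUnion_le S

theorem sum_Icc_one_div_two_pow (n : ℕ) :
    ∑ j ∈ Icc 1 n, (1 : ℝ) / 2 ^ j = 1 - 1 / 2 ^ n := by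
  induction n with
  | zero => simp
  | succ n ih =>
    rw [sum_Icc_succ_top (by omega), ih]
    field_simp
    ring

theorem mul_sum_Icc_one_div_two_pow_le {n e s i : ℕ} (hcover : n ≤ e + s)
    (he : 2 ^ i * e ≤ n) : (n : ℝ) * ∑ j ∈ Icc 1 i, (1 : ℝ) / 2 ^ j ≤ s := by
  have hcover' : (n : ℝ) ≤ e + s := by exact_mod_cast hcover
  have he' : (e : ℝ) ≤ n / 2 ^ i := by
    rw [le_div_iff₀ (by positivity), mul_comm]
    exact_mod_cast he
  rw [sum_Icc_one_div_two_pow, mul_sub, mul_one, mul_one_div]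
  linarith

namespace SimpleGraph

variable {V : Type*} {G : SimpleGraph V} {a b d r x y z : V}

theorem Walk.dist_add_dist_of_mem_support {p : G.Walk x y} (hp : p.length = G.dist x y)
    (hz : z ∈ p.support) : G.dist x z + G.dist z y = G.dist x y := by
  classical
  have hsplit := congrArg Walk.length (p.take_spec hz)
  rw [Walk.length_append] at hsplit
  have := dist_le (p.takeUntil z hz)
  have := dist_le (p.dropUntil z hz)
  have := (p.takeUntil z hz).reachable.dist_triangle_left y
  omega

theorem Walk.notMem_support_of_dist_lt {p : G.Walk x a} (hp : p.length = G.dist x a)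
    (hab : G.dist x a < G.dist x b) : b ∉ p.support := fun hb ↦ by
  have := p.dist_add_dist_of_mem_support hp hb
  omega

def IsDescendingPath (G : SimpleGraph V) (r : V) (q : ℕ → V) (K : ℕ) : Prop :=
  ∀ m < K, G.Adj (q m) (q (m + 1)) ∧ G.dist r (q (m + 1)) = G.dist r (q m) + 1

theorem IsDescendingPath.ne_add_two {q : ℕ → V} {K : ℕ} (hq : G.IsDescendingPath r q K)
    {m : ℕ} (hm : m + 2 ≤ K) : q m ≠ q (m + 2) := fun h ↦ by
  have h₁ := (hq m (by omega)).2
  have h₂ : G.dist r (q (m + 2)) = G.dist r (q (m + 1)) + 1 := (hq (m + 1) hm).2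
  rw [h] at h₁
  omega

namespace IsTree

variable (hG : G.IsTree)
include hG

theorem eq_of_adj_of_dist_lt (ha : G.Adj a b) (hd : G.Adj d b)
    (hax : G.dist x a < G.dist x b) (hdx : G.dist x d < G.dist x b) : a = d := by
  obtain ⟨r, hr, -⟩ := hG.connected.exists_path_of_dist x b
  have eq_penultimate {a} (ha : G.Adj a b) (hax : G.dist x a < G.dist x b) :
      a = r.penultimate := by
    obtain ⟨p, hp, hpl⟩ := hG.connected.exists_path_of_dist x a
    refine hG.isAcyclic.eq_penultimate_of_adj_end hr ha.symm ?_
    exact hG.isAcyclic.mem_support_of_ne_mem_support_of_adj_of_isPath hr hp ha.symm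
      (Walk.notMem_support_of_dist_lt hpl hax)
  rw [eq_penultimate ha hax, eq_penultimate hd hdx]

theorem exists_walk_length_eq_dist_notMem_edges (hab : G.Adj a b)
    (hx : G.dist b x < G.dist a x) (hy : G.dist b y < G.dist a y) :
    ∃ p : G.Walk x y, p.length = G.dist x y ∧ s(a, b) ∉ p.edges := by
  obtain ⟨p, -, hp⟩ := hG.connected.exists_path_of_dist x y
  refine ⟨p, hp, fun he ↦ ?_⟩
  have := p.dist_add_dist_of_mem_support hp (p.fst_mem_support_of_mem_edges he)
  have := p.dist_add_dist_of_mem_support hp (p.snd_mem_support_of_mem_edges he)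
  have := hG.dist_eq_dist_add_one_of_adj x hab
  have := hG.dist_eq_dist_add_one_of_adj y hab
  have := G.dist_comm (u := a) (v := x)
  have := G.dist_comm (u := b) (v := x)
  omega

end IsTree

variable [Fintype V]

/-- For an edge `ab` of a tree, the vertex set of the component of `b` after deleting `ab`. -/
noncomputable def branch (G : SimpleGraph V) (a b : V) : Finset V :=
  {x | G.dist b x < G.dist a x}

@[simp]
theorem mem_branch : x ∈ G.branch a b ↔ G.dist b x < G.dist a x := by
  simp [branch]

theorem Adj.mem_branch (hab : G.Adj a b) : b ∈ G.branch a b := by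
  simp [dist_eq_one_iff_adj.2 hab]

namespace IsTree

variable (hG : G.IsTree)
include hG

theorem dist_eq_add_one_of_mem_branch (hab : G.Adj a b) (hx : x ∈ G.branch a b) :
    G.dist a x = G.dist b x + 1 := by
  have := hG.dist_eq_dist_add_one_of_adj x hab
  rw [mem_branch] at hx
  rw [dist_comm (u := x), dist_comm (u := x)] at this
  omega

theorem dist_eq_add_one_of_notMem_branch (hab : G.Adj a b) (hx : x ∉ G.branch a b) :
    G.dist b x = G.dist a x + 1 := by
  have := hG.dist_eq_dist_add_one_of_adj x hab
  rw [mem_branch] at hx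
  rw [dist_comm (u := x), dist_comm (u := x)] at this
  omega

theorem card_branch_add_card_branch [DecidableEq V] (hab : G.Adj a b) :
    #(G.branch a b) + #(G.branch b a) = Fintype.card V := by
  rw [← card_add_card_compl (G.branch a b)]
  congr 2
  ext x
  refine ⟨fun hx ↦ mem_compl.2 fun hx' ↦ ?_, fun hx ↦ ?_⟩
  · simp only [mem_branch] at hx hx'
    omega
  · have := hG.dist_eq_add_one_of_notMem_branch hab (mem_compl.1 hx)
    simp only [mem_branch]
    omega

theorem branch_subset_branch (hab : G.Adj a b) (hbd : G.Adj b d) (had : a ≠ d) :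
    G.branch b d ⊆ G.branch a b := fun x hx ↦ by
  by_contra hx'
  have := hG.dist_eq_add_one_of_notMem_branch hab hx'
  refine had (hG.eq_of_adj_of_dist_lt (x := x) hab hbd.symm ?_ ?_)
  · rw [dist_comm (u := x), dist_comm (u := x)]
    omega
  · simpa only [mem_branch, dist_comm (v := x)] using hx

theorem branch_subset_branch_of_le {q : ℕ → V} {K : ℕ} (hq : G.IsDescendingPath r q K)
    {m l : ℕ} (hml : m ≤ l) (hlK : l < K) :
    G.branch (q l) (q (l + 1)) ⊆ G.branch (q m) (q (m + 1)) := by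
  induction l, hml using Nat.le_induction with
  | base => rfl
  | succ l hml ih =>
    exact (hG.branch_subset_branch (hq l (by omega)).1 (hq (l + 1) hlK).1
      (hq.ne_add_two (by omega))).trans (ih (by omega))

/-- The distances from `x` to the vertices of a descending path first decrease, then increase. -/
theorem exists_forall_dist_lt {cs : ℕ → V} {k i : ℕ} (hcs : G.IsDescendingPath r cs k)
    (hi1 : 1 ≤ i) (hik : i ≤ k) (hx : i < k → x ∉ G.branch (cs i) (cs (i + 1))) :
    ∃ j ∈ Icc 1 i, ∀ l, 1 ≤ l → l ≤ k → l ≠ j → G.dist (cs j) x < G.dist (cs l) x := by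
  refine exists_forall_lt_of_descents_downward_closed (fun l ↦ G.dist (cs l) x) hi1 hik
    (fun l hl ↦ ?_) (fun m l hml hlk hl ↦ ?_) (fun hik ↦ by simpa using hx hik)
  · simpa only [dist_comm (v := x)] using (hG.dist_ne_of_adj x (hcs l hl).1).symm
  · simpa using hG.branch_subset_branch_of_le hcs hml hlk (mem_branch.2 hl)

end IsTree

end SimpleGraph

namespace NCG

open SimpleGraph

variable {V : Type*} {α : ℝ} {st : V → Finset V} {a b b' c p r : V}

theorem graph_adj_of_mem (hself : ∀ u, u ∉ st u) (h : b ∈ st a) : (graph st).Adj a b :=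
  ⟨fun hab ↦ hself a (hab ▸ h), .inl h⟩

theorem deleteEdges_le_graph_update_swap [DecidableEq V] (a b b' : V) :
    (graph st).deleteEdges {s(a, b)} ≤
      graph (Function.update st a (insert b' ((st a).erase b))) := by
  intro u v huv
  obtain ⟨⟨huv, h⟩, he⟩ := deleteEdges_adj.1 huv
  simp only [Set.mem_singleton_iff, Sym2.eq_iff, not_or, not_and] at he
  refine ⟨huv, ?_⟩
  grind [Function.update_apply]

variable [Fintype V]

theorem IsCentroidOn.two_mul_card_branch_le {G : SimpleGraph V} (hG : G.Connected)
    (hc : IsCentroidOn G Set.univ c) (hcb : G.Adj c b) :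
    2 * #(G.branch c b) ≤ Fintype.card V := by
  have hsub : (G.branch c b : Set V) ⊆ {y | y ∈ Set.univ ∧
      ∃ p : G.Walk b y, c ∉ p.support ∧ ∀ z ∈ p.support, z ∈ Set.univ} := fun x hx ↦ by
    obtain ⟨p, -, hp⟩ := hG.exists_path_of_dist x b
    refine ⟨trivial, p.reverse, ?_, fun _ _ ↦ trivial⟩
    rw [Walk.support_reverse, List.mem_reverse]
    refine Walk.notMem_support_of_dist_lt hp ?_
    rwa [mem_coe, mem_branch, SimpleGraph.dist_comm, SimpleGraph.dist_comm (u := c)] at hx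
  have hcent := hc.2 b trivial hcb.ne'
  have hle := Set.ncard_le_ncard hsub
  rw [Set.ncard_univ, Nat.card_eq_fintype_card] at hcent
  rw [Set.ncard_coe_finset] at hle
  omega

variable [DecidableEq V]

theorem Stable.sum_dist_le (hstable : Stable α st) (hconn : (graph st).Connected) {u : V}
    {t : Finset V} (hut : u ∉ t) (hcard : #t = #(st u)) (f : V → ℕ)
    (hf : ∀ x, ∃ p : (graph (Function.update st u t)).Walk u x, p.length ≤ f x) :
    ∑ x, (graph st).dist u x ≤ ∑ x, f x := by
  have hconn' : (graph (Function.update st u t)).Connected :=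
    (connected_iff_exists_forall_reachable _).2 ⟨u, fun x ↦ ⟨(hf x).choose⟩⟩
  have hcost := hstable u t hut
  rw [cost, cost, distcost, distcost, if_pos hconn, if_pos hconn', Function.update_self, hcard,
    ← EReal.coe_add, ← EReal.coe_add, EReal.coe_le_coe_iff, add_le_add_iff_left] at hcost
  have hf' : ∑ x, ((graph (Function.update st u t)).dist u x : ℝ) ≤ ∑ x, (f x : ℝ) :=
    sum_le_sum fun x _ ↦ by
      obtain ⟨p, hp⟩ := hf x
      exact_mod_cast (dist_le p).trans hp
  exact_mod_cast hcost.trans hf'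

theorem Stable.sum_dist_branch_le (hself : ∀ u, u ∉ st u) (hstable : Stable α st)
    (hT : (graph st).IsTree) (hb : b ∈ st a) (hb' : b' ∈ (graph st).branch a b) :
    ∑ x ∈ (graph st).branch a b, (graph st).dist b x ≤
      ∑ x ∈ (graph st).branch a b, (graph st).dist b' x := by
  obtain rfl | hbb' := eq_or_ne b b'
  · rfl
  have hab := graph_adj_of_mem hself hb
  rw [mem_branch] at hb'
  have hb'a : b' ≠ a := by
    rintro rfl
    simp at hb'
  have hb'st : b' ∉ st a := fun h ↦ by
    have := dist_eq_one_iff_adj.2 (graph_adj_of_mem hself h)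
    have := hT.connected.pos_dist_of_ne hbb'
    omega
  -- `a` replaces its edge to `b` by an edge to `b'`
  set t := insert b' ((st a).erase b)
  have hat : a ∉ t := by simp [t, hb'a.symm, hself]
  have hcard : #t = #(st a) := by
    rw [card_insert_of_notMem fun h ↦ hb'st (mem_of_mem_erase h), card_erase_add_one hb]
  have hle := deleteEdges_le_graph_update_swap (st := st) a b b'
  have hab' : (graph (Function.update st a t)).Adj a b' := ⟨hb'a.symm, .inl (by simp [t])⟩
  have key := hstable.sum_dist_le hT.connected hat hcard
    (fun x ↦ if x ∈ (graph st).branch a b then (graph st).dist b' x + 1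
      else (graph st).dist a x) fun x ↦ by
    split_ifs with hx
    · obtain ⟨p, hp, hpe⟩ :=
        hT.exists_walk_length_eq_dist_notMem_edges hab hb' (mem_branch.1 hx)
      exact ⟨.cons hab' ((p.toDeleteEdge _ hpe).mapLe hle), by simp [hp]⟩
    · have := hT.dist_eq_add_one_of_notMem_branch hab hx
      obtain ⟨p, hp, hpe⟩ := hT.exists_walk_length_eq_dist_notMem_edges hab.symm
        (x := a) (y := x) (by simp [dist_eq_one_iff_adj.2 hab.symm]) (by omega)
      exact ⟨(p.toDeleteEdge _ (by rwa [Sym2.eq_swap])).mapLe hle, by simp [hp]⟩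
  have hsplit : ∑ x, (graph st).dist a x = ∑ x, if x ∈ (graph st).branch a b
      then (graph st).dist b x + 1 else (graph st).dist a x :=
    sum_congr rfl fun x _ ↦ by
      split_ifs with hx
      exacts [hT.dist_eq_add_one_of_mem_branch hab hx, rfl]
  rw [hsplit, sum_ite, sum_ite, filter_mem_eq_inter, univ_inter, sum_add_distrib,
    sum_add_distrib] at key
  omega

theorem Stable.two_mul_card_branch_le (hself : ∀ u, u ∉ st u) (hstable : Stable α st)
    (hT : (graph st).IsTree) (hb : b ∈ st a) (hbb' : (graph st).Adj b b') (hab' : a ≠ b') :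
    2 * #((graph st).branch b b') ≤ #((graph st).branch a b) := by
  have hab := graph_adj_of_mem hself hb
  have hsub := hT.branch_subset_branch hab hbb' hab'
  have key := hstable.sum_dist_branch_le hself hT hb (hsub hbb'.mem_branch)
  rw [← sum_sdiff hsub, ← sum_sdiff hsub (f := fun x ↦ (graph st).dist b' x)] at key
  have hnear : ∑ x ∈ (graph st).branch b b', (graph st).dist b x =
      ∑ x ∈ (graph st).branch b b', ((graph st).dist b' x + 1) :=
    sum_congr rfl fun x hx ↦ hT.dist_eq_add_one_of_mem_branch hbb' hx
  have hfar : ∑ x ∈ (graph st).branch a b \ (graph st).branch b b', (graph st).dist b' x =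
      ∑ x ∈ (graph st).branch a b \ (graph st).branch b b', ((graph st).dist b x + 1) :=
    sum_congr rfl fun x hx ↦ hT.dist_eq_add_one_of_notMem_branch hbb' (mem_sdiff.1 hx).2
  rw [hnear, hfar, sum_add_distrib, sum_add_distrib, sum_const, sum_const, smul_eq_mul,
    smul_eq_mul, mul_one, mul_one, card_sdiff_of_subset hsub] at key
  have := card_le_card hsub
  omega

theorem Stable.mem_of_two_mul_card_branch_le (hself : ∀ u, u ∉ st u) (hstable : Stable α st)
    (hT : (graph st).IsTree) (hpa : (graph st).Adj p a) (hab : (graph st).Adj a b)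
    (hpb : p ≠ b) (hp : 2 * #((graph st).branch p a) ≤ Fintype.card V) : b ∈ st a := by
  refine hab.2.resolve_right fun hba ↦ ?_
  have := hstable.two_mul_card_branch_le hself hT hba hpa.symm hpb.symm
  have := hT.card_branch_add_card_branch hpa
  have := hT.card_branch_add_card_branch hab
  have := card_pos.2 ⟨b, hab.mem_branch⟩
  omega

theorem Stable.two_pow_mul_card_branch_le (hself : ∀ u, u ∉ st u) (hstable : Stable α st)
    (hT : (graph st).IsTree) {q : ℕ → V} {K : ℕ} (hq : (graph st).IsDescendingPath r q K)
    (hroot : 2 * #((graph st).branch (q 0) (q 1)) ≤ Fintype.card V)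
    {m : ℕ} (hm : 1 ≤ m) (hmK : m < K) :
    2 ^ m * #((graph st).branch (q m) (q (m + 1))) ≤ Fintype.card V := by
  have hhalf : ∀ l < K, 2 * #((graph st).branch (q l) (q (l + 1))) ≤ Fintype.card V :=
    fun l hl ↦ (Nat.mul_le_mul_left 2 (card_le_card
      (hT.branch_subset_branch_of_le hq l.zero_le hl))).trans hroot
  induction m, hm using Nat.le_induction with
  | base => simpa using hhalf 1 hmK
  | succ m hm ih =>
    obtain ⟨l, rfl⟩ : ∃ l, m = l + 1 := ⟨m - 1, by omega⟩
    have hown := hstable.mem_of_two_mul_card_branch_le hself hT (hq l (by omega)).1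
      (hq (l + 1) (by omega)).1 (hq.ne_add_two (by omega)) (hhalf l (by omega))
    have := hstable.two_mul_card_branch_le hself hT hown (hq (l + 2) hmK).1 (hq.ne_add_two hmK)
    calc 2 ^ (l + 2) * #((graph st).branch (q (l + 2)) (q (l + 3)))
        = 2 ^ (l + 1) * (2 * #((graph st).branch (q (l + 2)) (q (l + 3)))) := by ring
      _ ≤ 2 ^ (l + 1) * #((graph st).branch (q (l + 1)) (q (l + 2))) := by gcongr
      _ ≤ Fintype.card V := ih (by omega)

end NCG

theorem subtree_size_bound_general {V : Type*} [Fintype V] [DecidableEq V]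
    (α : ℝ) (st : V → Finset V) (hself : ∀ u, u ∉ st u)
    (hstable : NCG.Stable α st)
    (htree : (NCG.graph st).IsTree)
    (c : V) (hc : NCG.IsCentroidOn (NCG.graph st) Set.univ c)
    (k : ℕ) (cs : ℕ → V)
    (hchild : (NCG.graph st).Adj c (cs 0))
    (hpath : ∀ i < k, (NCG.graph st).Adj (cs i) (cs (i + 1)) ∧
      (NCG.graph st).dist c (cs (i + 1)) = (NCG.graph st).dist c (cs i) + 1) :
    ∀ i, 1 ≤ i → i ≤ k →
      (Fintype.card V : ℝ) * ∑ j ∈ Finset.Icc 1 i, ((1 : ℝ) / 2 ^ j) ≤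
        ∑ j ∈ Finset.Icc 1 i,
          (({x : V | ∀ l, 1 ≤ l → l ≤ k → l ≠ j →
              (NCG.graph st).dist (cs j) x < (NCG.graph st).dist (cs l) x}).ncard : ℝ) := by
  intro i hi1 hik
  let q : ℕ → V := fun m ↦ Nat.casesOn m c cs
  have hq : (NCG.graph st).IsDescendingPath c q (k + 1) := by
    rintro (_ | m) hm
    exacts [⟨hchild, by simp [q, hchild]⟩, hpath m (by omega)]
  set E := if i < k then (NCG.graph st).branch (cs i) (cs (i + 1)) else ∅
  have hE : 2 ^ i * #E ≤ Fintype.card V := by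
    simp only [E]
    split_ifs with h
    · refine le_trans ?_ (hstable.two_pow_mul_card_branch_le hself htree hq
        (hc.two_mul_card_branch_le htree.connected hchild) (m := i + 1) (by omega) (by omega))
      exact Nat.mul_le_mul_right _ (Nat.pow_le_pow_right two_pos (by omega))
    · simp
  have hcover := card_le_card_add_sum_ncard E (Icc 1 i) (fun j ↦ {x | ∀ l, 1 ≤ l → l ≤ k →
      l ≠ j → (NCG.graph st).dist (cs j) x < (NCG.graph st).dist (cs l) x}) fun x hx ↦
    htree.exists_forall_dist_lt hpath hi1 hik fun hi hx' ↦ hx (by simp [E, hi, hx'])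
  exact_mod_cast mul_sum_Icc_one_div_two_pow_le hcover hE

/-- In a stable tree network rooted at a centroid `c`, along any
root-to-leaf path `c₀ = u, c₁, …, c_k = v` starting at a child `u` of `c` (each `c_(i+1)`
being the child of `c_i`), the sets
`n_i = |{x : d(c_i,x) < d(c_j,x) ∀ j ≠ i, 1 ≤ j ≤ k}` satisfy
`Σ_(j=1)^i n_j ≥ n · Σ_(j=1)^i 1/2^j` for every `1 ≤ i ≤ k`. -/
theorem subtree_size_bound {V : Type*} [Fintype V] [DecidableEq V]
    (α : ℝ) (st : V → Finset V) (hself : ∀ u, u ∉ st u)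
    (hstable : NCG.Stable α st)
    (htree : (NCG.graph st).IsTree)
    (c : V) (hc : NCG.IsCentroidOn (NCG.graph st) Set.univ c)
    (k : ℕ) (cs : ℕ → V)
    (hchild : (NCG.graph st).Adj c (cs 0))
    (hpath : ∀ i < k, (NCG.graph st).Adj (cs i) (cs (i + 1)) ∧
      (NCG.graph st).dist c (cs (i + 1)) = (NCG.graph st).dist c (cs i) + 1)
    (hleaf : ∃! w : V, (NCG.graph st).Adj (cs k) w) :
    ∀ i, 1 ≤ i → i ≤ k →
      (Fintype.card V : ℝ) * ∑ j ∈ Finset.Icc 1 i, ((1 : ℝ) / 2 ^ j) ≤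
        ∑ j ∈ Finset.Icc 1 i,
          (({x : V | ∀ l, 1 ≤ l → l ≤ k → l ≠ j →
              (NCG.graph st).dist (cs j) x < (NCG.graph st).dist (cs l) x}).ncard : ℝ) :=
  subtree_size_bound_general α st hself hstable htree c hc k cs hchild hpath
end
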